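/- Let {R_k} be a linear recurrence as in Lemma (not a geometric progression, no ratio of distinct roots of Φ(X) a root of unity). Let M(z) = z₁^{R_{n-1}}⋯z_n^{R₀} and let Ω₁ be the companion-type matrix with first column (c₁,…,c_n)ᵀ and superdiagonal 1's acting multiplicatively on variables. Then for distinct nonnegative integers k₁ ≠ k₂ and any nonzero constants γ₁, γ₂ in a field C of characteristic 0, the polynomials M(Ω₁^{k₁}z) - γ₁ and M(Ω₁^{k₂}z) - γ₂ are coprime in C[z₁,…,z_n]. -/

import Mathlib

set_option synthInstance.maxHeartbeats 400000
set_option maxHeartbeats 1000000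
set_option linter.unusedSectionVars false

/-- The characteristic polynomial Φ(X) = Xⁿ - c₁X^{n-1} - ⋯ - c_n (over ℂ) of the
recurrence R_{k+n} = c₁R_{k+n-1} + ⋯ + c_nR_k, where `c i` stands for c_{i+1}. -/
noncomputable def recCharPoly (n : ℕ) (c : Fin n → ℕ) : Polynomial ℂ :=
  Polynomial.X ^ n - ∑ i : Fin n, Polynomial.C ((c i : ℂ)) * Polynomial.X ^ (n - 1 - (i : ℕ))

/-- The monomial M(Ω₁^k z) = z₁^{R_{k+n-1}} ⋯ z_n^{R_k}. -/
noncomputable def Mmono (n : ℕ) (R : ℕ → ℕ) (C : Type*) [CommSemiring C] (k : ℕ) :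
    MvPolynomial (Fin n) C :=
  ∏ j : Fin n, MvPolynomial.X j ^ R (k + n - 1 - (j : ℕ))

section HomAux

open MvPolynomial

variable {σ : Type*} [Fintype σ] [DecidableEq σ] {K : Type*} [Field K]

/-- component extraction commutes with multiplication by a weighted-homogeneous factor -/
lemma wHC_mul_left (w : σ → ℤ) {p : MvPolynomial σ K} {δ : ℤ}
    (hp : ∀ e ∈ p.support, Finsupp.weight w e = δ) (r : MvPolynomial σ K) (s : ℤ) :
    weightedHomogeneousComponent w s (p * r)
      = p * weightedHomogeneousComponent w (s - δ) r := by
  ext x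
  rw [coeff_weightedHomogeneousComponent, coeff_mul, coeff_mul]
  split_ifs with h
  · refine Finset.sum_congr rfl fun uv huv => ?_
    rcases eq_or_ne (coeff uv.1 p) 0 with h0 | h0
    · rw [h0, zero_mul, zero_mul]
    · have hu : Finsupp.weight w uv.1 = δ := hp _ (mem_support_iff.mpr h0)
      have hadd : Finsupp.weight w uv.1 + Finsupp.weight w uv.2 = s := by
        rw [← map_add, Finset.HasAntidiagonal.mem_antidiagonal.mp huv, h]
      rw [coeff_weightedHomogeneousComponent, if_pos (by omega)]
  · refine (Finset.sum_eq_zero fun uv huv => ?_).symm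
    rcases eq_or_ne (coeff uv.1 p) 0 with h0 | h0
    · rw [h0, zero_mul]
    · have hu : Finsupp.weight w uv.1 = δ := hp _ (mem_support_iff.mpr h0)
      rw [coeff_weightedHomogeneousComponent, if_neg, mul_zero]
      intro hv
      exact h (by rw [← Finset.HasAntidiagonal.mem_antidiagonal.mp huv, map_add, hu, hv]; ring)

/-- top-component multiplicativity -/
lemma wHC_mul_top (w : σ → ℤ) {p q : MvPolynomial σ K} {Mp Mq : ℤ}
    (hp : ∀ e ∈ p.support, Finsupp.weight w e ≤ Mp)
    (hq : ∀ e ∈ q.support, Finsupp.weight w e ≤ Mq) :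
    weightedHomogeneousComponent w (Mp + Mq) (p * q)
      = weightedHomogeneousComponent w Mp p * weightedHomogeneousComponent w Mq q := by
  ext x
  rw [coeff_weightedHomogeneousComponent, coeff_mul, coeff_mul]
  split_ifs with h
  · refine Finset.sum_congr rfl fun uv huv => ?_
    rcases eq_or_ne (coeff uv.1 p) 0 with h0 | h0
    · rw [coeff_weightedHomogeneousComponent, coeff_weightedHomogeneousComponent, h0]
      simp
    · rcases eq_or_ne (coeff uv.2 q) 0 with h1 | h1
      · rw [coeff_weightedHomogeneousComponent, coeff_weightedHomogeneousComponent, h1]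
        simp
      · have hu := hp _ (mem_support_iff.mpr h0)
        have hv := hq _ (mem_support_iff.mpr h1)
        have hadd : Finsupp.weight w uv.1 + Finsupp.weight w uv.2 = Mp + Mq := by
          rw [← map_add, Finset.HasAntidiagonal.mem_antidiagonal.mp huv, h]
        rw [coeff_weightedHomogeneousComponent, coeff_weightedHomogeneousComponent,
          if_pos (by omega), if_pos (by omega)]
  · refine (Finset.sum_eq_zero fun uv huv => ?_).symm
    rw [coeff_weightedHomogeneousComponent, coeff_weightedHomogeneousComponent]
    rcases eq_or_ne (coeff uv.1 p) 0 with h0 | h0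
    · rcases eq_or_ne (coeff uv.2 q) 0 with h1 | h1
      · rw [h1]; simp
      · rw [h0]; simp
    · rcases eq_or_ne (coeff uv.2 q) 0 with h1 | h1
      · rw [h1]; simp
      · have hu := hp _ (mem_support_iff.mpr h0)
        have hv := hq _ (mem_support_iff.mpr h1)
        have hadd : Finsupp.weight w uv.1 + Finsupp.weight w uv.2 = Finsupp.weight w x := by
          rw [← map_add, Finset.HasAntidiagonal.mem_antidiagonal.mp huv]
        by_cases hWu : Finsupp.weight w uv.1 = Mp
        · rw [if_pos hWu, if_neg (by omega), mul_zero]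
        · rw [if_neg hWu, zero_mul]

set_option linter.unusedSectionVars false

lemma weight_neg_apply (w : σ → ℤ) (e : σ →₀ ℕ) :
    Finsupp.weight (-w) e = - Finsupp.weight w e := by
  simp [Finsupp.weight_apply, Finsupp.sum, smul_neg, ← Finset.sum_neg_distrib]

lemma wHC_neg (w : σ → ℤ) (M : ℤ) (p : MvPolynomial σ K) :
    weightedHomogeneousComponent (-w) (-M) p = weightedHomogeneousComponent w M p := by
  ext x
  rw [coeff_weightedHomogeneousComponent, coeff_weightedHomogeneousComponent, weight_neg_apply]
  congr 1
  simp only [eq_iff_iff, neg_inj]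

lemma hom_of_dvd (w : σ → ℤ) {d f : MvPolynomial σ K} (hf0 : f ≠ 0)
    (hf : ∀ e ∈ f.support, Finsupp.weight w e = (0 : ℤ)) (hdvd : d ∣ f) :
    ∃ δ : ℤ, ∀ e ∈ d.support, Finsupp.weight w e = δ := by
  obtain ⟨q, rfl⟩ := hdvd
  have hd0 : d ≠ 0 := left_ne_zero_of_mul hf0
  have hq0 : q ≠ 0 := right_ne_zero_of_mul hf0
  -- max/min of weights on supports
  have key : ∀ v : σ → ℤ, ∀ Mp Mq : ℤ,
      (∀ e ∈ d.support, Finsupp.weight v e ≤ Mp) →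
      (∀ e ∈ q.support, Finsupp.weight v e ≤ Mq) →
      (∃ e ∈ d.support, Finsupp.weight v e = Mp) →
      (∃ e ∈ q.support, Finsupp.weight v e = Mq) →
      (∀ e ∈ (d*q).support, Finsupp.weight v e = (0:ℤ)) →
      Mp + Mq = 0 := by
    intro v Mp Mq hup huq ⟨ed, hed, hwed⟩ ⟨eq', heq', hweq⟩ hfv
    have htop := wHC_mul_top v hup huq
    have hne : weightedHomogeneousComponent v Mp d * weightedHomogeneousComponent v Mq q ≠ 0 := by
      apply mul_ne_zero
      · intro hz
        have := coeff_weightedHomogeneousComponent (w := v) (n := Mp) (φ := d) ed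
        rw [hz, if_pos hwed] at this
        exact (mem_support_iff.mp hed) (by simp [← this])
      · intro hz
        have := coeff_weightedHomogeneousComponent (w := v) (n := Mq) (φ := q) eq'
        rw [hz, if_pos hweq] at this
        exact (mem_support_iff.mp heq') (by simp [← this])
    rw [← htop] at hne
    obtain ⟨x, hx⟩ := ne_zero_iff.mp hne
    rw [coeff_weightedHomogeneousComponent] at hx
    by_cases hwx : Finsupp.weight v x = Mp + Mq
    · rw [if_pos hwx] at hx
      have := hfv x (mem_support_iff.mpr hx)
      omega
    · rw [if_neg hwx] at hx; exact absurd rfl hx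
  -- instantiate with w (max) and -w (min)
  obtain ⟨ed, hed⟩ := ne_zero_iff.mp hd0
  obtain ⟨eq', heq'⟩ := ne_zero_iff.mp hq0
  set Sd := d.support.image (Finsupp.weight w) with hSd
  set Sq := q.support.image (Finsupp.weight w) with hSq
  have hSdne : Sd.Nonempty := ⟨_, Finset.mem_image_of_mem _ (mem_support_iff.mpr hed)⟩
  have hSqne : Sq.Nonempty := ⟨_, Finset.mem_image_of_mem _ (mem_support_iff.mpr heq')⟩
  obtain ⟨ad, had, hadw⟩ := Finset.mem_image.mp (Sd.max'_mem hSdne)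
  obtain ⟨aq, haq, haqw⟩ := Finset.mem_image.mp (Sq.max'_mem hSqne)
  obtain ⟨bd, hbd, hbdw⟩ := Finset.mem_image.mp (Sd.min'_mem hSdne)
  obtain ⟨bq, hbq, hbqw⟩ := Finset.mem_image.mp (Sq.min'_mem hSqne)
  have hmax : Sd.max' hSdne + Sq.max' hSqne = 0 := by
    refine key w _ _ (fun e he => Finset.le_max' _ _ (Finset.mem_image_of_mem _ he))
      (fun e he => Finset.le_max' _ _ (Finset.mem_image_of_mem _ he)) ⟨ad, had, hadw⟩
      ⟨aq, haq, haqw⟩ hf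
  have hmin : (-(Sd.min' hSdne)) + (-(Sq.min' hSqne)) = 0 := by
    refine key (-w) (-(Sd.min' hSdne)) (-(Sq.min' hSqne)) (fun e he => ?_) (fun e he => ?_)
      ⟨bd, hbd, by rw [weight_neg_apply, hbdw]⟩ ⟨bq, hbq, by rw [weight_neg_apply, hbqw]⟩
      (fun e he => by rw [weight_neg_apply, hf e he, neg_zero])
    · rw [weight_neg_apply]
      have := Finset.min'_le Sd _ (Finset.mem_image_of_mem _ he)
      omega
    · rw [weight_neg_apply]
      have := Finset.min'_le Sq _ (Finset.mem_image_of_mem _ he)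
      omega
  have hle1 : Sd.min' hSdne ≤ Sd.max' hSdne := Finset.min'_le _ _ (Sd.max'_mem hSdne)
  have hle2 : Sq.min' hSqne ≤ Sq.max' hSqne := Finset.min'_le _ _ (Sq.max'_mem hSqne)
  refine ⟨Sd.max' hSdne, fun e he => ?_⟩
  have h1 := Finset.le_max' Sd _ (Finset.mem_image_of_mem _ he)
  have h2 := Finset.min'_le Sd _ (Finset.mem_image_of_mem _ he)
  omega

lemma binom_coprime (w : σ → ℤ) (A B : σ →₀ ℕ) (γ₁ γ₂ : K) (hγ₂ : γ₂ ≠ 0)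
    (hA0 : A ≠ 0) (hWA : Finsupp.weight w A = (0:ℤ)) (hWB : Finsupp.weight w B ≠ (0:ℤ))
    (d : MvPolynomial σ K) (hd1 : d ∣ monomial A 1 - C γ₁)
    (hd2 : d ∣ monomial B 1 - C γ₂) : IsUnit d := by
  have hf0 : monomial A 1 - C γ₁ ≠ (0 : MvPolynomial σ K) := by
    intro hz
    have : coeff A (monomial A 1 - C γ₁) = 0 := by rw [hz]; simp
    rw [coeff_sub, coeff_monomial, if_pos rfl, coeff_C, if_neg (fun h => hA0 h.symm)] at this
    simp at this
  have hfsupp : ∀ e ∈ (monomial A 1 - C γ₁).support, Finsupp.weight w e = (0:ℤ) := by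
    intro e he
    have hne := mem_support_iff.mp he
    rw [coeff_sub, coeff_monomial, coeff_C] at hne
    by_cases h1 : A = e
    · rw [← h1]; exact hWA
    · by_cases h2 : e = 0
      · rw [h2]; exact map_zero _
      · rw [if_neg h1, if_neg (fun h => h2 h.symm)] at hne; simp at hne
  obtain ⟨δ, hδ⟩ := hom_of_dvd w hf0 hfsupp hd1
  obtain ⟨r, hr⟩ := hd2
  have hkey := wHC_mul_left w hδ r 0
  rw [← hr] at hkey
  have hgz : weightedHomogeneousComponent w 0 (monomial B 1 - C γ₂) = - C γ₂ := by
    ext x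
    rw [coeff_weightedHomogeneousComponent, coeff_neg, coeff_sub, coeff_monomial, coeff_C]
    by_cases h2 : x = 0
    · rw [if_pos (by rw [h2]; exact map_zero _), if_pos h2.symm, if_neg, zero_sub]
      intro hBx
      exact hWB (by rw [hBx, h2]; exact map_zero _)
    · have h0x : ¬(0:σ →₀ ℕ) = x := fun h => h2 h.symm
      rw [if_neg h0x, sub_zero, neg_zero]
      by_cases h1 : B = x
      · rw [if_neg (show ¬Finsupp.weight w x = 0 from fun hw => hWB (by rw [h1]; exact hw))]
      · rw [if_neg h1]
        simp
  rw [hgz] at hkey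
  have hdvd : d ∣ C γ₂ := by
    refine (dvd_neg).mp ⟨weightedHomogeneousComponent w (0 - δ) r, hkey⟩
  exact isUnit_of_dvd_unit hdvd
    (IsUnit.of_mul_eq_one (a := C γ₂) (C γ₂⁻¹) (by rw [← C_mul, mul_inv_cancel₀ hγ₂, C_1]))

end HomAux


section NT
variable {n : ℕ} {c : Fin n → ℕ} {R : ℕ → ℕ}

lemma window_nonzero (hn : 0 < n)
    (hrec : ∀ k : ℕ, R (k + n) = ∑ i : Fin n, c i * R (k + n - 1 - (i : ℕ)))
    (hcn : c ⟨n - 1, Nat.sub_lt hn Nat.one_pos⟩ ≠ 0)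
    (hinit : ∃ i : Fin n, R i ≠ 0) :
    ∀ k : ℕ, ∃ s : Fin n, R (k + (s : ℕ)) ≠ 0 := by
  intro k
  induction k with
  | zero => obtain ⟨i, hi⟩ := hinit; exact ⟨i, by simpa using hi⟩
  | succ k IH =>
    obtain ⟨s, hs⟩ := IH
    by_contra h
    push_neg at h
    have hz : ∀ t : ℕ, t < n → R (k + 1 + t) = 0 := fun t ht => h ⟨t, ht⟩
    have hL : R (k + n) = 0 := by
      have e : k + n = k + 1 + (n - 1) := by omega
      rw [e]; exact hz _ (by omega)
    have hsum : ∑ i : Fin n, c i * R (k + n - 1 - (i : ℕ)) = 0 := by rw [← hrec k, hL]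
    have hall := (Finset.sum_eq_zero_iff).mp hsum
    have hlast := hall ⟨n - 1, by omega⟩ (Finset.mem_univ _)
    have hRk : R k = 0 := by
      have e : k + n - 1 - (n - 1) = k := by omega
      rcases Nat.mul_eq_zero.mp (show c ⟨n-1, by omega⟩ * R k = 0 by simpa [e] using hlast) with h1 | h1
      · exact absurd h1 hcn
      · exact h1
    rcases Nat.eq_zero_or_pos (s : ℕ) with hs0 | hs0
    · rw [hs0] at hs; exact hs (by simpa using hRk)
    · have e : k + (s : ℕ) = k + 1 + ((s : ℕ) - 1) := by omega
      exact hs (by rw [e]; exact hz _ (by omega))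

lemma prop_extend (hn : 0 < n)
    (hrec : ∀ k : ℕ, R (k + n) = ∑ i : Fin n, c i * R (k + n - 1 - (i : ℕ)))
    {k₁ k₂ : ℕ} {lam : ℚ}
    (hbase : ∀ s : Fin n, (R (k₂ + (s:ℕ)) : ℚ) = lam * R (k₁ + (s:ℕ))) :
    ∀ k : ℕ, (R (k₂ + k) : ℚ) = lam * R (k₁ + k) := by
  have hrecQ : ∀ k : ℕ, (R (k + n) : ℚ) = ∑ i : Fin n, (c i : ℚ) * R (k + n - 1 - (i : ℕ)) := by
    intro k; exact_mod_cast congrArg (Nat.cast : ℕ → ℚ) (hrec k)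
  intro k
  induction k using Nat.strong_induction_on with
  | _ k IH =>
    rcases Nat.lt_or_ge k n with hk | hk
    · exact hbase ⟨k, hk⟩
    · have e2 : k₂ + k = k₂ + (k - n) + n := by omega
      have e1 : k₁ + k = k₁ + (k - n) + n := by omega
      rw [e2, e1, hrecQ, hrecQ, Finset.mul_sum]
      refine Finset.sum_congr rfl fun i _ => ?_
      have hi : (i : ℕ) < n := i.isLt
      have e3 : k₂ + (k - n) + n - 1 - (i:ℕ) = k₂ + (k - 1 - (i:ℕ)) := by omega
      have e4 : k₁ + (k - n) + n - 1 - (i:ℕ) = k₁ + (k - 1 - (i:ℕ)) := by omega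
      rw [e3, e4, IH (k - 1 - (i:ℕ)) (by omega)]
      ring
end NT


section BW
variable {n : ℕ} {c : Fin n → ℕ} {R : ℕ → ℕ}

lemma backward_geom (hn : 0 < n)
    (hrec : ∀ k : ℕ, R (k + n) = ∑ i : Fin n, c i * R (k + n - 1 - (i : ℕ)))
    (hcn : c ⟨n - 1, Nat.sub_lt hn Nat.one_pos⟩ ≠ 0)
    {k₁ : ℕ} {q₀ : ℚ} (hq0 : q₀ ≠ 0) (hR1 : (R k₁ : ℚ) ≠ 0)
    (hfwd : ∀ k : ℕ, (R (k₁ + k + 1) : ℚ) = q₀ * R (k₁ + k)) :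
    ∀ k : ℕ, (R (k + 1) : ℚ) = q₀ * R k := by
  have hrecQ : ∀ k : ℕ, (R (k + n) : ℚ) = ∑ i : Fin n, (c i : ℚ) * R (k + n - 1 - (i : ℕ)) := by
    intro k; exact_mod_cast congrArg (Nat.cast : ℕ → ℚ) (hrec k)
  have hcnQ : ((c ⟨n - 1, by omega⟩ : ℕ) : ℚ) ≠ 0 := Nat.cast_ne_zero.mpr hcn
  -- G K : geometric from K on
  set G : ℕ → Prop := fun K => ∀ t, K ≤ t → (R (t + 1) : ℚ) = q₀ * R t with hG
  have hGk₁ : G k₁ := by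
    intro t ht
    have := hfwd (t - k₁)
    rwa [show k₁ + (t - k₁) = t by omega] at this
  have hpow : ∀ K, G K → ∀ j t, K ≤ t → (R (t + j) : ℚ) = q₀ ^ j * R t := by
    intro K hGK j
    induction j with
    | zero => intro t _; simp
    | succ j IHj =>
      intro t ht
      have h1 : (R (t + j + 1) : ℚ) = q₀ * R (t + j) := hGK (t + j) (by omega)
      rw [show t + (j+1) = t + j + 1 by omega, h1, IHj t ht, pow_succ]
      ring
  have hstar : q₀ ^ n = ∑ i : Fin n, (c i : ℚ) * q₀ ^ (n - 1 - (i : ℕ)) := by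
    have h1 := hrecQ k₁
    rw [hpow k₁ hGk₁ n k₁ le_rfl] at h1
    have h2 : ∀ i : Fin n, (c i : ℚ) * R (k₁ + n - 1 - (i:ℕ))
        = ((c i : ℚ) * q₀ ^ (n - 1 - (i:ℕ))) * R k₁ := by
      intro i
      have hi : (i : ℕ) < n := i.isLt
      rw [show k₁ + n - 1 - (i:ℕ) = k₁ + (n - 1 - (i:ℕ)) by omega,
        hpow k₁ hGk₁ (n - 1 - (i:ℕ)) k₁ le_rfl]
      ring
    rw [Finset.sum_congr rfl (fun i _ => h2 i), ← Finset.sum_mul] at h1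
    exact mul_right_cancel₀ hR1 h1
  -- downward induction
  have hdown : ∀ j, G (k₁ - j) := by
    intro j
    induction j with
    | zero => simpa using hGk₁
    | succ j IH =>
      rcases Nat.lt_or_ge 0 (k₁ - j) with h0 | h0
      case inr => rw [show k₁ - (j+1) = k₁ - j by omega]; exact IH
      case inl =>
        set K := k₁ - j with hK
        rw [show k₁ - (j+1) = K - 1 by omega]
        intro t ht
        rcases Nat.lt_or_ge t K with hKt | hKt
        case inr => exact IH t hKt
        · have htK : t = K - 1 := by omega
          subst htK
          rw [show K - 1 + 1 = K by omega]
          -- use the recurrence at K - 1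
          have hE0 := hrecQ (K - 1)
          have hlastFin : (⟨n - 1, by omega⟩ : Fin n) ∈ Finset.univ := Finset.mem_univ _
          rw [← Finset.sum_erase_add _ _ hlastFin] at hE0
          have hLHS : (R (K - 1 + n) : ℚ) = q₀ ^ (n-1) * R K := by
            rw [show K - 1 + n = K + (n - 1) by omega, hpow K IH (n-1) K le_rfl]
          have hterm : ∀ i ∈ Finset.univ.erase (⟨n - 1, by omega⟩ : Fin n),
              (c i : ℚ) * R (K - 1 + n - 1 - (i:ℕ))
                = ((c i : ℚ) * q₀ ^ (n - 2 - (i:ℕ))) * R K := by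
            intro i hi
            have hine : (i : ℕ) ≠ n - 1 := by
              intro hv
              exact (Finset.mem_erase.mp hi).1 (Fin.ext hv)
            have hilt : (i : ℕ) < n := i.isLt
            rw [show K - 1 + n - 1 - (i:ℕ) = K + (n - 2 - (i:ℕ)) by omega,
              hpow K IH (n - 2 - (i:ℕ)) K le_rfl]
            ring
          rw [Finset.sum_congr rfl hterm, ← Finset.sum_mul, hLHS,
            show K - 1 + n - 1 - ((⟨n - 1, by omega⟩ : Fin n) : ℕ) = K - 1 by
              simp; omega] at hE0
          -- hE0 : q₀^(n-1) * R K = (Sig) * R K + c_last * R (K-1)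
          -- hstar split the same way
          have hstar' := hstar
          rw [← Finset.sum_erase_add _ _ hlastFin] at hstar'
          have hterm2 : ∀ i ∈ Finset.univ.erase (⟨n - 1, by omega⟩ : Fin n),
              (c i : ℚ) * q₀ ^ (n - 1 - (i:ℕ))
                = ((c i : ℚ) * q₀ ^ (n - 2 - (i:ℕ))) * q₀ := by
            intro i hi
            have hine : (i : ℕ) ≠ n - 1 := by
              intro hv
              exact (Finset.mem_erase.mp hi).1 (Fin.ext hv)
            have hilt : (i : ℕ) < n := i.isLt
            rw [show n - 1 - (i:ℕ) = (n - 2 - (i:ℕ)) + 1 by omega, pow_succ]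
            ring
          rw [Finset.sum_congr rfl hterm2, ← Finset.sum_mul,
            show (((⟨n - 1, by omega⟩ : Fin n) : ℕ)) = n - 1 by simp,
            show q₀ ^ n = q₀ ^ (n-1) * q₀ by
              rw [← pow_succ]; congr 1; omega,
            show n - 1 - (n - 1) = 0 by omega, pow_zero, mul_one] at hstar'
          -- now cancel
          apply mul_left_cancel₀ hcnQ
          have := hstar'
          set Sig := ∑ i ∈ Finset.univ.erase (⟨n - 1, by omega⟩ : Fin n),
            (c i : ℚ) * q₀ ^ (n - 2 - (i:ℕ)) with hSig
          set P := q₀ ^ (n - 1) with hP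
          -- hE0 : P * R K = Sig * R K + c_last * R (K-1)
          -- hstar' : P * q₀ = Sig * q₀ + c_last
          linear_combination q₀ * hE0 - (R K : ℚ) * hstar'
  have h := hdown k₁
  rw [Nat.sub_self] at h
  exact fun k => h k (Nat.zero_le k)
end BW

noncomputable def shiftOp : (ℕ → ℂ) →ₗ[ℂ] (ℕ → ℂ) where
  toFun v := fun k => v (k + 1)
  map_add' := by intros; rfl
  map_smul' := by intros; rfl

lemma shiftOp_pow (j : ℕ) (v : ℕ → ℂ) (k : ℕ) : ((shiftOp ^ j) v) k = v (k + j) := by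
  induction j generalizing v k with
  | zero => rfl
  | succ j IH =>
    rw [pow_succ, Module.End.mul_apply]
    have : ((shiftOp ^ j) (shiftOp v)) k = (shiftOp v) (k + j) := IH _ _
    rw [this]
    rfl

section SA
variable {n : ℕ} {c : Fin n → ℕ} {R : ℕ → ℕ}

lemma stepA (hn : 0 < n)
    (hrec : ∀ k : ℕ, R (k + n) = ∑ i : Fin n, c i * R (k + n - 1 - (i : ℕ)))
    (hcn : c ⟨n - 1, Nat.sub_lt hn Nat.one_pos⟩ ≠ 0)
    (hinit : ∃ i : Fin n, R i ≠ 0)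
    (hgeom : ¬ ∃ q : ℚ, ∀ k : ℕ, (R (k + 1) : ℚ) = q * R k)
    (hratio : ∀ x y : ℂ, (recCharPoly n c).IsRoot x → (recCharPoly n c).IsRoot y →
      x ≠ y → ∀ k : ℕ, 0 < k → (x / y) ^ k ≠ 1)
    {k₁ k₂ : ℕ} (hlt : k₁ < k₂)
    (hprop : ∀ s t : Fin n,
      R (k₁ + (s:ℕ)) * R (k₂ + (t:ℕ)) = R (k₁ + (t:ℕ)) * R (k₂ + (s:ℕ))) :
    False := by
  obtain ⟨s₀, hs₀⟩ := window_nonzero hn hrec hcn hinit k₁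
  obtain ⟨t₀, ht₀⟩ := window_nonzero hn hrec hcn hinit k₂
  have h2 : R (k₂ + (s₀:ℕ)) ≠ 0 := by
    have hp := hprop s₀ t₀
    intro hz
    rw [hz, mul_zero] at hp
    rcases Nat.mul_eq_zero.mp hp with h | h
    · exact hs₀ h
    · exact ht₀ h
  set lam : ℚ := (R (k₂ + (s₀:ℕ)) : ℚ) / (R (k₁ + (s₀:ℕ)) : ℚ) with hlam
  have hs₀Q : ((R (k₁ + (s₀:ℕ)) : ℕ) : ℚ) ≠ 0 := Nat.cast_ne_zero.mpr hs₀
  have hlam0 : lam ≠ 0 := div_ne_zero (Nat.cast_ne_zero.mpr h2) hs₀Q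
  have hbase : ∀ s : Fin n, (R (k₂ + (s:ℕ)) : ℚ) = lam * R (k₁ + (s:ℕ)) := by
    intro s
    have hcast : ((R (k₁+(s:ℕ)) :ℕ):ℚ) * ((R (k₂+(s₀:ℕ)):ℕ):ℚ)
        = ((R (k₁+(s₀:ℕ)):ℕ):ℚ) * ((R (k₂+(s:ℕ)):ℕ):ℚ) := by
      exact_mod_cast congrArg (Nat.cast : ℕ → ℚ) (hprop s s₀)
    rw [hlam, div_mul_eq_mul_div, eq_div_iff hs₀Q]
    linear_combination -hcast
  have hAll := prop_extend hn hrec hbase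
  set m := k₂ - k₁ with hm
  have hmpos : 0 < m := by omega
  set u : ℕ → ℂ := fun k => (R (k₁ + k) : ℂ) with hu
  have hus₀ : u (s₀:ℕ) ≠ 0 := Nat.cast_ne_zero.mpr hs₀
  have hrecC : ∀ k : ℕ, (R (k + n) : ℂ) = ∑ i : Fin n, (c i : ℂ) * R (k + n - 1 - (i : ℕ)) := by
    intro k; exact_mod_cast congrArg (Nat.cast : ℕ → ℂ) (hrec k)
  have hPhi : (Polynomial.aeval shiftOp (recCharPoly n c)) u = 0 := by
    have h1 : (Polynomial.aeval shiftOp (recCharPoly n c)) u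
        = (shiftOp ^ n) u - ∑ i : Fin n, (c i : ℂ) • ((shiftOp ^ (n - 1 - (i:ℕ))) u) := by
      unfold recCharPoly
      rw [map_sub, map_pow, Polynomial.aeval_X, map_sum, LinearMap.sub_apply,
        LinearMap.sum_apply]
      congr 1
      refine Finset.sum_congr rfl fun i _ => ?_
      rw [map_mul, Polynomial.aeval_C, map_pow, Polynomial.aeval_X, Module.End.mul_apply,
        Module.algebraMap_end_apply]
    rw [h1, sub_eq_zero]
    funext k
    rw [shiftOp_pow]
    have h2 : (∑ i : Fin n, (c i : ℂ) • ((shiftOp ^ (n - 1 - (i:ℕ))) u)) k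
        = ∑ i : Fin n, (c i : ℂ) * u (k + (n - 1 - (i:ℕ))) := by
      rw [Finset.sum_apply]
      exact Finset.sum_congr rfl fun i _ => by rw [Pi.smul_apply, shiftOp_pow, smul_eq_mul]
    rw [h2]
    show ((R (k₁ + (k + n)) :ℕ):ℂ) = _
    rw [show k₁ + (k + n) = k₁ + k + n by omega, hrecC (k₁ + k)]
    refine Finset.sum_congr rfl fun i _ => ?_
    have hi : (i:ℕ) < n := i.isLt
    congr 1
    show ((R (k₁ + k + n - 1 - (i:ℕ)) :ℕ):ℂ) = ((R (k₁ + (k + (n - 1 - (i:ℕ)))) :ℕ):ℂ)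
    have hidx : k₁ + k + n - 1 - (i:ℕ) = k₁ + (k + (n - 1 - (i:ℕ))) := by omega
    rw [hidx]
  set Pp : Polynomial ℂ := Polynomial.X ^ m - Polynomial.C ((lam:ℚ) : ℂ) with hPp
  have hP : (Polynomial.aeval shiftOp Pp) u = 0 := by
    rw [hPp, map_sub, map_pow, Polynomial.aeval_X, Polynomial.aeval_C, LinearMap.sub_apply,
      sub_eq_zero, Module.algebraMap_end_apply]
    funext k
    rw [shiftOp_pow, Pi.smul_apply, smul_eq_mul]
    show ((R (k₁ + (k + m)) :ℕ):ℂ) = ((lam:ℚ):ℂ) * ((R (k₁ + k) :ℕ):ℂ)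
    have h4 : ((R (k₂ + k) :ℕ):ℚ) = lam * ((R (k₁ + k):ℕ):ℚ) := hAll k
    have h5 : (((R (k₂ + k) :ℕ):ℚ):ℂ) = ((lam * ((R (k₁ + k):ℕ):ℚ) :ℚ):ℂ) := by
      exact_mod_cast congrArg (Rat.cast : ℚ → ℂ) h4
    push_cast at h5
    rw [show k₁ + (k + m) = k₂ + k by omega]
    exact_mod_cast h5
  set Φp := recCharPoly n c with hΦp
  set g := EuclideanDomain.gcd Φp Pp with hg
  have hgu : (Polynomial.aeval shiftOp g) u = 0 := by
    rw [hg, EuclideanDomain.gcd_eq_gcd_ab Φp Pp, map_add, LinearMap.add_apply,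
      mul_comm Φp _, mul_comm Pp _, map_mul, map_mul, Module.End.mul_apply, Module.End.mul_apply,
      hPhi, hP, map_zero, map_zero, add_zero]
  have hPne : Pp ≠ 0 := Polynomial.X_pow_sub_C_ne_zero hmpos _
  have hgne : g ≠ 0 := fun h => hPne (EuclideanDomain.gcd_eq_zero_iff.mp h).2
  have hlamC : ((lam:ℚ):ℂ) ≠ 0 := by exact_mod_cast hlam0
  have hsep : Pp.Separable :=
    Polynomial.separable_X_pow_sub_C _ (Nat.cast_ne_zero.mpr hmpos.ne') hlamC
  have hgsep : g.Separable := hsep.of_dvd (EuclideanDomain.gcd_dvd_right _ _)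
  have hdeg : 0 < g.degree := by
    rcases lt_or_ge 0 g.degree with h | h
    · exact h
    · exfalso
      have hgC := Polynomial.eq_C_of_degree_le_zero h
      have hc0 : g.coeff 0 ≠ 0 := fun hz => hgne (by rw [hgC, hz, map_zero])
      rw [hgC, Polynomial.aeval_C, Module.algebraMap_end_apply] at hgu
      rcases smul_eq_zero.mp hgu with h' | h'
      · exact hc0 h'
      · exact hus₀ (by rw [h']; rfl)
  obtain ⟨α, hα⟩ := Complex.exists_root hdeg
  have hrootsP : ∀ β : ℂ, g.IsRoot β → β ^ m = ((lam:ℚ):ℂ) := by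
    intro β hβ
    obtain ⟨h, hh⟩ := EuclideanDomain.gcd_dvd_right Φp Pp
    have hev : Pp.eval β = 0 := by
      rw [hh, Polynomial.eval_mul]
      rw [show Polynomial.eval β g = 0 from hβ, zero_mul]
    rw [hPp, Polynomial.eval_sub, Polynomial.eval_pow, Polynomial.eval_X,
      Polynomial.eval_C, sub_eq_zero] at hev
    exact hev
  have hrootsΦ : ∀ β : ℂ, g.IsRoot β → Φp.IsRoot β :=
    fun β hβ => hβ.dvd (EuclideanDomain.gcd_dvd_left _ _)
  by_cases hone : ∀ β : ℂ, g.IsRoot β → β = α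
  case neg =>
    push_neg at hone
    obtain ⟨β, hβ, hβα⟩ := hone
    refine hratio α β (hrootsΦ α hα) (hrootsΦ β hβ) (fun h => hβα h.symm) m hmpos ?_
    rw [div_pow, hrootsP α hα, hrootsP β hβ, div_self hlamC]
  case pos =>
    have hsplits : g.Splits := IsAlgClosed.splits g
    have hprod := hsplits.eq_prod_roots
    have hallroots : ∀ b ∈ g.roots, b = α := fun b hb => hone b (Polynomial.isRoot_of_mem_roots hb)
    have hrepl := Multiset.eq_replicate_card.mpr hallroots
    have hmemα : α ∈ g.roots := by rw [Polynomial.mem_roots hgne]; exact hα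
    have hcardpos : 0 < Multiset.card g.roots := Multiset.card_pos_iff_exists_mem.mpr ⟨α, hmemα⟩
    have hmapeq : (g.roots.map fun a => Polynomial.X - Polynomial.C a).prod
        = (Polynomial.X - Polynomial.C α) ^ (Multiset.card g.roots) := by
      conv_lhs => rw [hrepl]
      rw [Multiset.map_replicate, Multiset.prod_replicate]
    have hgpow : g = Polynomial.C g.leadingCoeff
        * (Polynomial.X - Polynomial.C α) ^ (Multiset.card g.roots) := by
      conv_lhs => rw [hprod, hmapeq]
    have hlc : g.leadingCoeff ≠ 0 := Polynomial.leadingCoeff_ne_zero.mpr hgne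
    have hcard1 : Multiset.card g.roots = 1 := by
      by_contra hne1
      have h2le : 2 ≤ Multiset.card g.roots := by omega
      have hdvd2 : (Polynomial.X - Polynomial.C α) * (Polynomial.X - Polynomial.C α) ∣ g := by
        rw [hgpow, ← pow_two]
        exact ((pow_dvd_pow _ h2le).mul_left _)
      exact Polynomial.not_isUnit_X_sub_C α (hgsep.squarefree _ hdvd2)
    rw [hcard1, pow_one] at hgpow
    rw [hgpow] at hgu
    simp only [map_mul, map_sub, Polynomial.aeval_X, Polynomial.aeval_C, Module.End.mul_apply,
      LinearMap.sub_apply, Module.algebraMap_end_apply] at hgu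
    have h' : shiftOp u - α • u = 0 := by
      rw [← smul_sub] at hgu
      rcases smul_eq_zero.mp hgu with h' | h'
      · exact absurd h' hlc
      · exact h'
    have hstep' : ∀ k : ℕ, u (k + 1) = α * u k := fun k => congrFun (sub_eq_zero.mp h') k
    have hα0 : α ≠ 0 := by
      intro hz
      rw [← hrootsP α hα, hz, zero_pow hmpos.ne'] at hlamC
      exact hlamC rfl
    have hRk₁ : R k₁ ≠ 0 := by
      intro hz
      have hzz : ∀ k, u k = 0 := by
        intro k
        induction k with
        | zero => show ((R (k₁ + 0) :ℕ):ℂ) = 0; rw [Nat.add_zero, hz]; simp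
        | succ k IH => rw [hstep' k, IH, mul_zero]
      exact hus₀ (hzz _)
    have hRk₁Q : ((R k₁ :ℕ): ℚ) ≠ 0 := Nat.cast_ne_zero.mpr hRk₁
    set q₀ : ℚ := (R (k₁ + 1) : ℚ) / (R k₁ : ℚ) with hq₀
    have hstepR : ∀ k : ℕ, ((R (k₁ + k + 1) :ℕ):ℂ) = α * ((R (k₁ + k):ℕ):ℂ) := by
      intro k
      exact hstep' k
    have hαq : α = ((q₀:ℚ) : ℂ) := by
      rw [hq₀]
      push_cast
      rw [eq_div_iff (show ((R k₁ :ℕ):ℂ) ≠ 0 from Nat.cast_ne_zero.mpr hRk₁)]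
      have h7 := hstepR 0
      rw [Nat.add_zero] at h7
      exact h7.symm
    have hq0 : q₀ ≠ 0 := by
      intro hzq
      rw [hαq, hzq] at hα0
      exact hα0 (by norm_num)
    have hfwdQ : ∀ k : ℕ, (R (k₁ + k + 1) : ℚ) = q₀ * R (k₁ + k) := by
      intro k
      have h8 := hstepR k
      rw [hαq] at h8
      have h9 : ((R (k₁ + k + 1) :ℕ):ℚ) = ((q₀ * ((R (k₁ + k) :ℕ):ℚ) : ℚ)) := by
        have : (((R (k₁ + k + 1) :ℕ):ℚ):ℂ) = (((q₀ * ((R (k₁ + k):ℕ):ℚ) : ℚ)):ℂ) := by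
          push_cast
          exact h8
        exact Rat.cast_injective this
      exact h9
    exact hgeom ⟨q₀, backward_geom hn hrec hcn hq0 hRk₁Q hfwdQ⟩
end SA

/-- Let {R_k} be a linear recurrence (not a geometric progression, with no
ratio of distinct roots of Φ(X) a root of unity). Then for distinct nonnegative integers
k₁ ≠ k₂ and any nonzero constants γ₁, γ₂ in a field C of characteristic 0, the
polynomials M(Ω₁^{k₁}z) - γ₁ and M(Ω₁^{k₂}z) - γ₂ are coprime in C[z₁,…,z_n]. -/
theorem stmt_10 (n : ℕ) (hn : 0 < n) (c : Fin n → ℕ) (R : ℕ → ℕ)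
    (hrec : ∀ k : ℕ, R (k + n) = ∑ i : Fin n, c i * R (k + n - 1 - (i : ℕ)))
    (hcn : c ⟨n - 1, by omega⟩ ≠ 0)
    (hinit : ∃ i : Fin n, R i ≠ 0)
    (hgeom : ¬ ∃ q : ℚ, ∀ k : ℕ, (R (k + 1) : ℚ) = q * R k)
    (hratio : ∀ x y : ℂ, (recCharPoly n c).IsRoot x → (recCharPoly n c).IsRoot y →
      x ≠ y → ∀ k : ℕ, 0 < k → (x / y) ^ k ≠ 1)
    (C : Type*) [Field C] [CharZero C] (γ₁ γ₂ : C) (hγ₁ : γ₁ ≠ 0) (hγ₂ : γ₂ ≠ 0)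
    (k₁ k₂ : ℕ) (hk : k₁ ≠ k₂) :
    ∀ d : MvPolynomial (Fin n) C,
      d ∣ Mmono n R C k₁ - MvPolynomial.C γ₁ →
      d ∣ Mmono n R C k₂ - MvPolynomial.C γ₂ → IsUnit d := by
  intro d hd1 hd2
  set a : Fin n → ℕ := fun j => R (k₁ + n - 1 - (j:ℕ)) with ha
  set b : Fin n → ℕ := fun j => R (k₂ + n - 1 - (j:ℕ)) with hb
  have hnp : ∃ i j : Fin n, a i * b j ≠ a j * b i := by
    by_contra hcon
    push_neg at hcon
    have hprop : ∀ s t : Fin n,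
        R (k₁ + (s:ℕ)) * R (k₂ + (t:ℕ)) = R (k₁ + (t:ℕ)) * R (k₂ + (s:ℕ)) := by
      intro s t
      have hs : (s:ℕ) < n := s.isLt
      have ht : (t:ℕ) < n := t.isLt
      have h := hcon ⟨n - 1 - (s:ℕ), by omega⟩ ⟨n - 1 - (t:ℕ), by omega⟩
      simp only [ha, hb] at h
      rw [show k₁ + n - 1 - (n - 1 - (s:ℕ)) = k₁ + (s:ℕ) by omega,
          show k₂ + n - 1 - (n - 1 - (t:ℕ)) = k₂ + (t:ℕ) by omega,
          show k₁ + n - 1 - (n - 1 - (t:ℕ)) = k₁ + (t:ℕ) by omega,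
          show k₂ + n - 1 - (n - 1 - (s:ℕ)) = k₂ + (s:ℕ) by omega] at h
      exact h
    rcases Nat.lt_or_ge k₁ k₂ with hlt | hge
    · exact stepA hn hrec hcn hinit hgeom hratio hlt hprop
    · have hlt : k₂ < k₁ := by omega
      exact stepA hn hrec hcn hinit hgeom hratio hlt
        (fun s t => by rw [Nat.mul_comm, hprop t s, Nat.mul_comm])
  obtain ⟨i, j, hij⟩ := hnp
  have hij' : i ≠ j := by rintro rfl; exact hij rfl
  set w : Fin n → ℤ := fun t => if t = i then (a j : ℤ) else if t = j then -(a i : ℤ) else 0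
    with hw
  have hweight : ∀ e : Fin n →₀ ℕ,
      Finsupp.weight w e = (a j : ℤ) * e i - (a i : ℤ) * e j := by
    intro e
    rw [Finsupp.weight_apply, Finsupp.sum_fintype _ _ (fun t => zero_smul ℕ (w t))]
    have hsplit : ∀ t : Fin n, (e t) • w t
        = (if t = i then (a j:ℤ) * e i else 0) + (if t = j then -((a i:ℤ) * e j) else 0) := by
      intro t
      simp only [hw]
      by_cases h1 : t = i
      · subst h1
        rw [if_pos rfl, if_pos rfl, if_neg hij', add_zero, nsmul_eq_mul]
        ring
      · by_cases h2 : t = j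
        · subst h2
          rw [if_neg h1, if_pos rfl, if_neg h1, if_pos rfl, zero_add, nsmul_eq_mul]
          ring
        · rw [if_neg h1, if_neg h2, if_neg h1, if_neg h2, add_zero, smul_zero]
    rw [Finset.sum_congr rfl (fun t _ => hsplit t), Finset.sum_add_distrib,
      Finset.sum_ite_eq' Finset.univ i (fun _ => (a j:ℤ) * e i),
      Finset.sum_ite_eq' Finset.univ j (fun _ => -((a i:ℤ) * e j)),
      if_pos (Finset.mem_univ i), if_pos (Finset.mem_univ j)]
    ring
  -- monomial representation of Mmono
  have hMm : ∀ (v : Fin n → ℕ) (kk : ℕ), (∀ jj : Fin n, v jj = R (kk + n - 1 - (jj:ℕ))) →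
      Mmono n R C kk
        = MvPolynomial.monomial (Finsupp.equivFunOnFinite.symm v) (1 : C) := by
    intro v kk hv
    unfold Mmono
    rw [← MvPolynomial.prod_X_pow_eq_monomial]
    set F := Finsupp.equivFunOnFinite.symm v with hF
    have h1 : ∏ jj : Fin n, MvPolynomial.X (R := C) jj ^ R (kk + n - 1 - (jj:ℕ))
        = ∏ jj : Fin n, MvPolynomial.X jj ^ F jj := by
      refine Finset.prod_congr rfl fun x _ => ?_
      rw [hF, Finsupp.equivFunOnFinite_symm_apply_apply, hv x]
    rw [h1]
    exact (Finset.prod_subset (Finset.subset_univ F.support)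
      (fun x _ hx => by rw [Finsupp.notMem_support_iff.mp hx, pow_zero])).symm
  set A : Fin n →₀ ℕ := Finsupp.equivFunOnFinite.symm a with hA
  set B : Fin n →₀ ℕ := Finsupp.equivFunOnFinite.symm b with hB
  have hd1' : d ∣ MvPolynomial.monomial A (1 : C) - MvPolynomial.C γ₁ := by
    rw [← hMm a k₁ (fun jj => rfl)]; exact hd1
  have hd2' : d ∣ MvPolynomial.monomial B (1 : C) - MvPolynomial.C γ₂ := by
    rw [← hMm b k₂ (fun jj => rfl)]; exact hd2
  have hAapp : ∀ t : Fin n, A t = a t := fun t => Finsupp.equivFunOnFinite_symm_apply_apply _ _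
  have hBapp : ∀ t : Fin n, B t = b t := fun t => Finsupp.equivFunOnFinite_symm_apply_apply _ _
  have hA0 : A ≠ 0 := by
    obtain ⟨s₀, hs₀⟩ := window_nonzero hn hrec hcn hinit k₁
    intro hz
    have hs : (s₀:ℕ) < n := s₀.isLt
    have h1 : A ⟨n - 1 - (s₀:ℕ), by omega⟩ = 0 := by rw [hz]; rfl
    rw [hAapp] at h1
    apply hs₀
    rw [show k₁ + (s₀:ℕ) = k₁ + n - 1 - ((⟨n - 1 - (s₀:ℕ), by omega⟩ : Fin n) : ℕ) by
      simp; omega]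
    exact h1
  have hWA : Finsupp.weight w A = (0:ℤ) := by
    rw [hweight, hAapp, hAapp]; ring
  have hWB : Finsupp.weight w B ≠ (0:ℤ) := by
    rw [hweight, hBapp, hBapp]
    intro hE
    apply hij
    have : ((a j : ℤ)) * b i = (a i : ℤ) * b j := by omega
    exact_mod_cast this.symm
  exact binom_coprime w A B γ₁ γ₂ hγ₂ hA0 hWA hWB d hd1' hd2'
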